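/- Let u be an infinite recurrent word over A and v = S_k^{c^l}(u) the word obtained by k-to-k substitution of the power c^l (c ∉ A, k,l ≥ 1). Then v is recurrent: every factor of v occurs infinitely often in v. -/
import Mathlib

open List

/-- The factor of the infinite word `u` starting at position `i` with length `n`. -/
def factorAt {B : Type*} (u : ℕ → B) (i n : ℕ) : List B :=
  (List.range n).map fun j => u (i + j)

/-- `w` is a (finite) factor of the infinite word `u`. -/
def IsFactor {B : Type*} (u : ℕ → B) (w : List B) : Prop :=
  ∃ i, w = factorAt u i w.length

/-- The complexity function: number of distinct factors of length `n`. -/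
noncomputable def complexity {B : Type*} (u : ℕ → B) (n : ℕ) : ℕ :=
  Set.ncard {w : List B | w.length = n ∧ IsFactor u w}

/-- The `k`-to-`k` substitution of the power `c^l`: writing
`u = x₀w₁x₁w₂x₂⋯` with `|wᵢ| = k`, the word `S_k^{c^l}(u) = c^l w₁ c^l w₂ c^l ⋯`. -/
def subst {B : Type*} (k l : ℕ) (c : B) (u : ℕ → B) : ℕ → B := fun n =>
  if n % (k + l) < l then c
  else u (n / (k + l) * (k + 1) + 1 + (n % (k + l) - l))

/-- An infinite word is recurrent if every factor occurs infinitely often. -/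
def Recurrent {B : Type*} (u : ℕ → B) : Prop :=
  ∀ w, IsFactor u w → ∀ N, ∃ i, N ≤ i ∧ w = factorAt u i w.length

lemma factorAt_length {B : Type*} (u : ℕ → B) (a n : ℕ) :
    (factorAt u a n).length = n := by simp [factorAt]

lemma factorAt_eq {B : Type*} (u : ℕ → B) (a b n : ℕ) :
    factorAt u a n = factorAt u b n ↔ ∀ j < n, u (a + j) = u (b + j) := by
  unfold factorAt
  rw [List.map_eq_map_iff]
  simp

/-- From recurrence: arbitrarily large partial periods on any window `[0, L)`. -/
lemma exists_period {B : Type*} (u : ℕ → B) (hrec : Recurrent u) (L M : ℕ) :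
    ∃ p, M ≤ p ∧ ∀ s < L, u s = u (s + p) := by
  obtain ⟨i, hi, he⟩ := hrec (factorAt u 0 L) ⟨0, by rw [factorAt_length]⟩ M
  rw [factorAt_length] at he
  refine ⟨i, hi, fun s hs => ?_⟩
  have := (factorAt_eq u 0 i L).mp he s hs
  simpa [Nat.add_comm] using this

/-- Partial periods divisible by `K`, arbitrarily large. -/
lemma exists_aligned_period {B : Type*} (u : ℕ → B) (hrec : Recurrent u)
    (K L N : ℕ) (hK : 1 ≤ K) :
    ∃ D, N ≤ D ∧ ∀ s < L, u s = u (s + K * D) := by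
  have step : ∀ t, ∃ p, K * (N + 1) ≤ p ∧ ∀ s < t + L, u s = u (s + p) :=
    fun t => exists_period u hrec (t + L) (K * (N + 1))
  choose P hP1 hP2 using step
  let T : ℕ → ℕ := fun m => Nat.rec 0 (fun _ prev => prev + P prev) m
  have hTsucc : ∀ m, T (m + 1) = T m + P (T m) := fun m => rfl
  have hmono : Monotone T := monotone_nat_of_le_succ (fun m => by rw [hTsucc]; omega)
  have hgrow : ∀ a b, a < b → K * (N + 1) ≤ T b - T a := by
    intro a b hab
    have h1 := hP1 (T a)
    have h2 := hmono (show a + 1 ≤ b by omega)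
    rw [hTsucc] at h2
    omega
  have key : ∀ a b, a ≤ b → ∀ s < L, u s = u (s + (T b - T a)) := by
    intro a b hab
    induction b with
    | zero =>
      intro s hs
      have : a = 0 := Nat.le_zero.mp hab
      simp [this]
    | succ b ih =>
      rcases Nat.lt_or_ge a (b + 1) with h | h
      · have hab' : a ≤ b := by omega
        intro s hs
        have hTab : T a ≤ T b := hmono hab'
        have h1 : T (b + 1) - T a = (T b - T a) + P (T b) := by
          rw [hTsucc]; omega
        rw [h1, ← Nat.add_assoc]
        have hlt : s + (T b - T a) < T b + L := by omega
        rw [← hP2 (T b) (s + (T b - T a)) hlt]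
        exact ih hab' s hs
      · have : a = b + 1 := by omega
        intro s hs
        simp [this]
  -- pigeonhole on residues mod K among T 0, ..., T K
  have hpig : ∃ a ∈ Finset.range (K + 1), ∃ b ∈ Finset.range (K + 1),
      a ≠ b ∧ T a % K = T b % K := by
    apply Finset.exists_ne_map_eq_of_card_lt_of_maps_to (t := Finset.range K)
    · simp
    · intro x _
      exact Finset.mem_range.mpr (Nat.mod_lt _ (by omega))
  obtain ⟨a, _, b, _, hne, hmod⟩ := hpig
  -- wlog a < b
  rcases Nat.lt_or_ge a b with hab | hab
  case _ =>
    have hTab : T a ≤ T b := hmono (le_of_lt hab)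
    have hdvd : K ∣ (T b - T a) := (Nat.modEq_iff_dvd' hTab).mp hmod
    refine ⟨(T b - T a) / K, ?_, ?_⟩
    · have h2 := hgrow a b hab
      obtain ⟨d, hd⟩ := hdvd
      have hd2 : N + 1 ≤ d := Nat.le_of_mul_le_mul_left (show K * (N + 1) ≤ K * d by omega) (show 0 < K by omega)
      have hq : (T b - T a) / K = d := by
        rw [hd, Nat.mul_div_cancel_left _ (show 0 < K by omega)]
      omega
    · intro s hs
      have := key a b (le_of_lt hab) s hs
      rwa [Nat.mul_div_cancel' hdvd]
  case _ =>
    have hba : b < a := by omega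
    have hTba : T b ≤ T a := hmono (le_of_lt hba)
    have hdvd : K ∣ (T a - T b) := (Nat.modEq_iff_dvd' hTba).mp hmod.symm
    refine ⟨(T a - T b) / K, ?_, ?_⟩
    · have h2 := hgrow b a hba
      obtain ⟨d, hd⟩ := hdvd
      have hd2 : N + 1 ≤ d := Nat.le_of_mul_le_mul_left (show K * (N + 1) ≤ K * d by omega) (show 0 < K by omega)
      have hq : (T a - T b) / K = d := by
        rw [hd, Nat.mul_div_cancel_left _ (show 0 < K by omega)]
      omega
    · intro s hs
      have := key b a (le_of_lt hba) s hs
      rwa [Nat.mul_div_cancel' hdvd]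

/-- If `u` is recurrent then so is `v = S_k^{c^l}(u)`. -/
theorem subst_recurrent {B : Type*} (u : ℕ → B) (c : B) (hc : ∀ n, u n ≠ c)
    (k l : ℕ) (hk : 1 ≤ k) (hl : 1 ≤ l) (hrec : Recurrent u) :
    Recurrent (subst k l c u) := by
  intro w hw N
  obtain ⟨i, hi⟩ := hw
  set n := w.length with hn
  obtain ⟨D, hND, hper⟩ :=
    exists_aligned_period u hrec (k + 1) ((i + n) * (k + 1) + (k + l) + 2) N (by omega)
  have hkl : 0 < k + l := by omega
  refine ⟨i + (k + l) * D, ?_, ?_⟩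
  · have : D ≤ (k + l) * D := Nat.le_mul_of_pos_left D hkl
    omega
  · refine hi.trans ((factorAt_eq (subst k l c u) i (i + (k + l) * D) n).mpr ?_)
    intro j hj
    have hrw : i + (k + l) * D + j = (i + j) + (k + l) * D := by ring
    rw [hrw]
    set m := i + j with hm
    show subst k l c u m = subst k l c u (m + (k + l) * D)
    unfold subst
    have h1 : (m + (k + l) * D) % (k + l) = m % (k + l) := by
      simp [Nat.add_mul_mod_self_left]
    have h2 : (m + (k + l) * D) / (k + l) = m / (k + l) + D :=
      Nat.add_mul_div_left _ _ hkl
    rw [h1, h2]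
    by_cases hcase : m % (k + l) < l
    · simp [hcase]
    · simp only [hcase, if_false]
      have harg : (m / (k + l) + D) * (k + 1) + 1 + (m % (k + l) - l)
          = (m / (k + l) * (k + 1) + 1 + (m % (k + l) - l)) + (k + 1) * D := by ring
      rw [harg]
      apply hper
      have hd : m / (k + l) ≤ m := Nat.div_le_self _ _
      have hmm : m % (k + l) < k + l := Nat.mod_lt _ hkl
      have hb1 : m / (k + l) * (k + 1) ≤ m * (k + 1) := Nat.mul_le_mul_right _ hd
      have hb2 : m * (k + 1) < (i + n) * (k + 1) :=
        (Nat.mul_lt_mul_right (show 0 < k + 1 by omega)).mpr (by omega)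
      omega
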